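/- (Proposition 2.2, part 3.) Let s ∈ ℝ with s > 1, and let z ∈ ℍ satisfy im z < 1 and im(δ·z) ≤ 1 for every δ ∈ Γ. Assume there exists U > 0 such that for every t ≥ 0 the set A(z,t) is finite with Π(z,t) ≤ U·e^t. Then s · ∫₀^∞ e^{−s t} · Π(z,t) dt ≤ E(z,s) ≤ s · ∫₀^∞ e^{−s t} · Π(z,t+1) dt, where the integrals are Lebesgue integrals over [0,∞). -/

import Mathlib

open scoped UpperHalfPlane MatrixGroups
open UpperHalfPlane

noncomputable section

/-- The parabolic element `T = [[1,1],[0,1]]` of `SL(2,ℝ)`, acting on `ℍ` by `z ↦ z + 1`. -/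
def T : SL(2, ℝ) := ⟨!![1, 1; 0, 1], by norm_num [Matrix.det_fin_two_of]⟩

/-- The horocycle segment `h ⊆ ℍ`: points with `-1/2 ≤ re < 1/2` and `im = 1`. -/
def horocycle : Set ℍ := {w : ℍ | -(1 / 2) ≤ w.re ∧ w.re < 1 / 2 ∧ w.im = 1}

variable (Γ : Subgroup SL(2, ℝ))

/-- The cyclic subgroup `Γ∞` of `Γ` generated by `T`. -/
abbrev GammaInf (hT : T ∈ Γ) : Subgroup Γ := Subgroup.zpowers ⟨T, hT⟩

/-- The set of right cosets `Γ∞\Γ`. -/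
abbrev Cosets (hT : T ∈ Γ) := Quotient (QuotientGroup.rightRel (GammaInf Γ hT))

variable (hT : T ∈ Γ)

/-- The term `(im (δ·z))^s` of the Eisenstein series attached to a coset `q ∈ Γ∞\Γ`
(`δ` a representative of `q`; the value is independent of the representative). -/
def eisTerm (z : ℍ) (s : ℝ) (q : Cosets Γ hT) : ℝ :=
  (((Quotient.out q : Γ) : SL(2, ℝ)) • z).im ^ s

/-- The Eisenstein series `E(z,s) = ∑'_{q ∈ Γ∞\Γ} (im (δ·z))^s`. -/
def Eis (z : ℍ) (s : ℝ) : ℝ := ∑' q : Cosets Γ hT, eisTerm Γ hT z s q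

/-- `A(z,t)`: the set of cosets `q ∈ Γ∞\Γ` admitting a representative `δ` with
`dist(i, δ·z) ≤ t`. -/
def Aset (z : ℍ) (t : ℝ) : Set (Cosets Γ hT) :=
  {q | ∃ δ : Γ, Quotient.mk (QuotientGroup.rightRel (GammaInf Γ hT)) δ = q ∧
    dist UpperHalfPlane.I ((δ : SL(2, ℝ)) • z) ≤ t}

/-- `A(h,z,t)`: the set of cosets `q ∈ Γ∞\Γ` admitting a representative `δ` with
`-1/2 ≤ re(δ·z) < 1/2` and `infDist (δ·z) h ≤ t`. -/
def Ahset (z : ℍ) (t : ℝ) : Set (Cosets Γ hT) :=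
  {q | ∃ δ : Γ, Quotient.mk (QuotientGroup.rightRel (GammaInf Γ hT)) δ = q ∧
    -(1 / 2) ≤ ((δ : SL(2, ℝ)) • z).re ∧ ((δ : SL(2, ℝ)) • z).re < 1 / 2 ∧
    Metric.infDist ((δ : SL(2, ℝ)) • z) horocycle ≤ t}

/-!
Write `r(q) = |log im(δ·z)|`, the distance from `δ·z` to the horocycle `im = 1`. Since
`im(δ·z) ≤ 1`, the terms of `E(z,s)` are `e^{-s r(q)}`, and Tonelli turns
`∑ e^{-s r(q)} = ∑ s ∫_{r(q)}^∞ e^{-st} dt` into `s ∫₀^∞ e^{-st} #{q : r(q) ≤ t} dt`.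
The counting function is squeezed between `Π(z,t)` and `Π(z,t+1)`: `|log im w| ≤ dist(i,w)`
always, and after translating `δ·z` by a power of `T` into the strip `|re| ≤ 1/2`, the
triangle inequality through `re w + i` gives `dist(i,w) ≤ 1/2 + |log im w|`. The bound
`Π(z,t) ≤ U e^t` with `s > 1` makes the integrals converge, so the comparison is legitimate.
-/

open Real MeasureTheory Set

theorem setLIntegral_Ioi_indicator_Ici_exp_neg_mul {s a : ℝ} (hs : 0 < s) (ha : 0 ≤ a) :
    ∫⁻ t in Ioi 0, (Ici a).indicator (fun t => ENNReal.ofReal (exp (-s * t))) t =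
      ENNReal.ofReal (exp (-s * a) / s) := by
  have hset : (Ici a ∩ Ioi 0 : Set ℝ) =ᵐ[volume] Ioi a := by
    have hIoi : Ioi a ∩ Ioi 0 = Ioi a := inter_eq_left.mpr (Ioi_subset_Ioi ha)
    exact hIoi ▸ ae_eq_set_inter Ioi_ae_eq_Ici.symm (ae_eq_refl _)
  rw [lintegral_indicator measurableSet_Ici, Measure.restrict_restrict measurableSet_Ici,
    setLIntegral_congr hset, ← ofReal_integral_eq_lintegral_ofReal (exp_neg_integrableOn_Ioi a hs)
      (ae_of_all _ fun _ => (exp_pos _).le), integral_exp_mul_Ioi (neg_lt_zero.mpr hs),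
    neg_div_neg_eq]

theorem lintegral_exp_neg_mul_encard_sublevel {α : Type*} [Countable α] {s : ℝ} (hs : 0 < s)
    (r : α → ℝ) (hr : ∀ a, 0 ≤ r a) :
    ENNReal.ofReal s *
        ∫⁻ t in Ioi 0, ENNReal.ofReal (exp (-s * t)) * {a | r a ≤ t}.encard =
      ∑' a, ENNReal.ofReal (exp (-s * r a)) := by
  have hsum : ∀ t, ENNReal.ofReal (exp (-s * t)) * {a | r a ≤ t}.encard =
      ∑' a, (Ici (r a)).indicator (fun t => ENNReal.ofReal (exp (-s * t))) t := by
    intro t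
    rw [← ENNReal.tsum_set_one, tsum_subtype _ fun _ => 1, ← ENNReal.tsum_mul_left]
    refine tsum_congr fun a => ?_
    by_cases h : r a ≤ t <;> simp [indicator, h]
  simp_rw [hsum]
  rw [lintegral_tsum fun a => by fun_prop (disch := exact measurableSet_Ici),
    ← ENNReal.tsum_mul_left]
  refine tsum_congr fun a => ?_
  rw [setLIntegral_Ioi_indicator_Ici_exp_neg_mul hs (hr a), ← ENNReal.ofReal_mul hs.le,
    mul_div_cancel₀ _ hs.ne']

theorem monotone_ncard_comp {ι α : Type*} [Preorder ι] {A : ι → Set α} (hA : Monotone A)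
    (hfin : ∀ i, (A i).Finite) : Monotone fun i => ((A i).ncard : ℝ) :=
  fun _ j hij => Nat.cast_le.mpr (ncard_le_ncard (hA hij) (hfin j))

theorem monotone_setOf_le {α : Type*} (r : α → ℝ) : Monotone fun t => {a | r a ≤ t} :=
  fun _ _ hst _ ha => le_trans ha hst

theorem tsum_exp_neg_mul_eq_mul_integral_ncard {α : Type*} {s : ℝ} (hs : 0 < s) (r : α → ℝ)
    (hr : ∀ a, 0 ≤ r a) (hfin : ∀ t, {a | r a ≤ t}.Finite) :
    ∑' a, exp (-s * r a) = s * ∫ t in Ioi 0, exp (-s * t) * {a | r a ≤ t}.ncard := by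
  have : Countable α := by
    have hcover : (univ : Set α) ⊆ ⋃ n : ℕ, {a | r a ≤ n} :=
      fun a _ => mem_iUnion.mpr (exists_nat_ge (r a))
    exact countable_univ_iff.mp ((countable_iUnion fun n : ℕ => (hfin n).countable).mono hcover)
  have hmeas : Measurable fun t => exp (-s * t) * {a | r a ≤ t}.ncard :=
    (by fun_prop : Measurable fun t => exp (-s * t)).mul
      (monotone_ncard_comp (monotone_setOf_le r) hfin).measurable
  calc ∑' a, exp (-s * r a) = (∑' a, ENNReal.ofReal (exp (-s * r a))).toReal := by
        simp [ENNReal.tsum_toReal_eq, (exp_pos _).le]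
    _ = (ENNReal.ofReal s *
          ∫⁻ t in Ioi 0, ENNReal.ofReal (exp (-s * t)) * {a | r a ≤ t}.encard).toReal := by
        rw [lintegral_exp_neg_mul_encard_sublevel hs r hr]
    _ = s * ∫ t in Ioi 0, exp (-s * t) * {a | r a ≤ t}.ncard := by
        rw [integral_eq_lintegral_of_nonneg_ae (ae_of_all _ fun t => by positivity)
          hmeas.aestronglyMeasurable, ENNReal.toReal_mul, ENNReal.toReal_ofReal hs.le]
        congr 2
        refine lintegral_congr fun t => ?_
        rw [ENNReal.ofReal_mul (exp_pos _).le, ENNReal.ofReal_natCast, ← (hfin t).cast_ncard_eq]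
        rfl

theorem integrableOn_exp_neg_mul_mul {s C : ℝ} (hs : 1 < s) {g : ℝ → ℝ} (hg : Monotone g)
    (hg0 : ∀ t, 0 ≤ g t) (hC : ∀ t, 0 < t → g t ≤ C * exp t) :
    IntegrableOn (fun t => exp (-s * t) * g t) (Ioi 0) := by
  refine ((exp_neg_integrableOn_Ioi 0 (sub_pos.mpr hs)).const_mul C).mono'
    ((by fun_prop : Measurable fun t => exp (-s * t)).mul hg.measurable).aestronglyMeasurable
    ((ae_restrict_iff' measurableSet_Ioi).mpr (ae_of_all _ fun t ht => ?_))
  calc ‖exp (-s * t) * g t‖ = exp (-s * t) * g t := norm_of_nonneg (by positivity [hg0 t])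
    _ ≤ exp (-s * t) * (C * exp t) := by gcongr; exact hC t ht
    _ = C * exp (-(s - 1) * t) := by rw [mul_left_comm, ← exp_add]; ring_nf

theorem mul_integral_ncard_le_tsum_exp_le {α : Type*} {s : ℝ} (hs : 1 < s) (r : α → ℝ)
    (hr : ∀ a, 0 ≤ r a) (A : ℝ → Set α) (hA : Monotone A) (hAr : ∀ t, A t ⊆ {a | r a ≤ t})
    (hrA : ∀ t, {a | r a ≤ t} ⊆ A (t + 1)) (U : ℝ)
    (hU : ∀ t, 0 ≤ t → (A t).Finite ∧ ((A t).ncard : ℝ) ≤ U * exp t) :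
    s * ∫ t in Ioi 0, exp (-s * t) * (A t).ncard ≤ ∑' a, exp (-s * r a) ∧
      ∑' a, exp (-s * r a) ≤ s * ∫ t in Ioi 0, exp (-s * t) * (A (t + 1)).ncard := by
  have hs0 : 0 < s := by linarith
  have hAfin : ∀ t, (A t).Finite :=
    fun t => (hU _ (le_max_right t 0)).1.subset (hA (le_max_left t 0))
  have hrfin : ∀ t, {a | r a ≤ t}.Finite := fun t => (hAfin _).subset (hrA t)
  have hA1_bound : ∀ t, 0 < t → ((A (t + 1)).ncard : ℝ) ≤ (U * exp 1) * exp t := fun t ht => by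
    rw [mul_assoc, ← exp_add, add_comm 1 t]
    exact (hU _ (by linarith)).2
  have hA1_mono : Monotone fun t => ((A (t + 1)).ncard : ℝ) :=
    fun t t' h => monotone_ncard_comp hA hAfin (by linarith : t + 1 ≤ t' + 1)
  have hAr_card : ∀ t, ((A t).ncard : ℝ) ≤ {a | r a ≤ t}.ncard :=
    fun t => Nat.cast_le.mpr (ncard_le_ncard (hAr t) (hrfin t))
  have hrA_card : ∀ t, ({a | r a ≤ t}.ncard : ℝ) ≤ (A (t + 1)).ncard :=
    fun t => Nat.cast_le.mpr (ncard_le_ncard (hrA t) (hAfin _))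
  have hint_r := integrableOn_exp_neg_mul_mul hs (monotone_ncard_comp (monotone_setOf_le r) hrfin)
    (fun _ => Nat.cast_nonneg _) fun t ht => (hrA_card t).trans (hA1_bound t ht)
  have hint_A1 := integrableOn_exp_neg_mul_mul hs hA1_mono (fun _ => Nat.cast_nonneg _) hA1_bound
  rw [tsum_exp_neg_mul_eq_mul_integral_ncard hs0 r hr hrfin]
  constructor
  · refine mul_le_mul_of_nonneg_left (integral_mono_of_nonneg
      (ae_of_all _ fun t => by positivity) hint_r (ae_of_all _ fun t => ?_)) hs0.le
    exact mul_le_mul_of_nonneg_left (hAr_card t) (exp_pos _).le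
  · refine mul_le_mul_of_nonneg_left (integral_mono_of_nonneg
      (ae_of_all _ fun t => by positivity) hint_A1 (ae_of_all _ fun t => ?_)) hs0.le
    exact mul_le_mul_of_nonneg_left (hrA_card t) (exp_pos _).le

theorem T_smul (w : ℍ) : T • w = (1 : ℝ) +ᵥ w := by
  ext
  rw [coe_specialLinearGroup_apply, coe_vadd]
  simp [T, add_comm]

theorem T_zpow_smul (n : ℤ) (w : ℍ) : T ^ n • w = (n : ℝ) +ᵥ w := by
  induction n using Int.induction_on generalizing w with
  | zero => simp
  | succ k ih => rw [zpow_add_one, mul_smul, T_smul, ih, vadd_vadd]; push_cast; ring_nf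
  | pred k ih =>
      have hinv : T⁻¹ • w = (-1 : ℝ) +ᵥ w := inv_smul_eq_iff.mpr (by rw [T_smul, vadd_vadd]; simp)
      rw [zpow_sub_one, mul_smul, hinv, ih, vadd_vadd]; push_cast; ring_nf

theorem abs_log_im_le_dist_I (w : ℍ) : |log w.im| ≤ dist I w := by
  simpa [Real.dist_eq, abs_sub_comm] using dist_log_im_le I w

theorem dist_I_le_abs_re_add_abs_log_im (w : ℍ) : dist I w ≤ |w.re| + |log w.im| := by
  have hp : dist I (w.re +ᵥ I) ≤ |w.re| := by
    simpa [Complex.dist_eq, coe_vadd] using dist_le_dist_coe_div_sqrt I (w.re +ᵥ I)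
  have hw : dist (w.re +ᵥ I) w = |log w.im| := by
    rw [dist_of_re_eq (by simp), vadd_im, I_im, log_one, Real.dist_eq, zero_sub, abs_neg]
  linarith [dist_triangle I (w.re +ᵥ I) w]

def horoDepth (z : ℍ) (q : Cosets Γ hT) : ℝ :=
  |log (((Quotient.out q : Γ) : SL(2, ℝ)) • z).im|

section Cosets

variable {Γ hT}

theorem exists_T_zpow_mul_of_mk_eq {δ δ' : Γ}
    (h : Quotient.mk (QuotientGroup.rightRel (GammaInf Γ hT)) δ = Quotient.mk _ δ') :
    ∃ n : ℤ, (δ' : SL(2, ℝ)) = T ^ n * δ := by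
  obtain ⟨n, hn⟩ :=
    Subgroup.mem_zpowers_iff.mp (QuotientGroup.rightRel_apply.mp (Quotient.exact h))
  refine ⟨n, ?_⟩
  rw [← inv_mul_cancel_right (δ' : SL(2, ℝ)) δ, ← Subgroup.coe_inv, ← Subgroup.coe_mul, ← hn]
  simp

theorem im_smul_eq_of_mk_eq {δ δ' : Γ}
    (h : Quotient.mk (QuotientGroup.rightRel (GammaInf Γ hT)) δ = Quotient.mk _ δ') (z : ℍ) :
    ((δ' : SL(2, ℝ)) • z).im = ((δ : SL(2, ℝ)) • z).im := by
  obtain ⟨n, hn⟩ := exists_T_zpow_mul_of_mk_eq h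
  rw [hn, mul_smul, T_zpow_smul, vadd_im]

theorem mk_T_zpow_mul (n : ℤ) (δ : Γ) :
    Quotient.mk (QuotientGroup.rightRel (GammaInf Γ hT)) ((⟨T, hT⟩ : Γ) ^ n * δ) =
      Quotient.mk _ δ := by
  refine Quotient.sound (QuotientGroup.rightRel_apply.mpr ?_)
  rw [mul_inv_rev, mul_inv_cancel_left]
  exact inv_mem (zpow_mem (Subgroup.mem_zpowers _) n)

theorem exists_mk_eq_abs_re_le (z : ℍ) (q : Cosets Γ hT) :
    ∃ δ : Γ, Quotient.mk _ δ = q ∧ |((δ : SL(2, ℝ)) • z).re| ≤ 1 / 2 ∧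
      ((δ : SL(2, ℝ)) • z).im = (((Quotient.out q : Γ) : SL(2, ℝ)) • z).im := by
  set w := ((Quotient.out q : Γ) : SL(2, ℝ)) • z
  set n := -⌊w.re + 1 / 2⌋
  have hsmul : ((((⟨T, hT⟩ : Γ) ^ n * Quotient.out q : Γ) : SL(2, ℝ)) • z) = (n : ℝ) +ᵥ w := by
    rw [Subgroup.coe_mul, Subgroup.coe_zpow, mul_smul, T_zpow_smul]
  refine ⟨(⟨T, hT⟩ : Γ) ^ n * Quotient.out q, by rw [mk_T_zpow_mul, Quotient.out_eq], ?_⟩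
  rw [hsmul, vadd_re, vadd_im, abs_le]
  have := Int.floor_le (w.re + 1 / 2)
  have := Int.lt_floor_add_one (w.re + 1 / 2)
  exact ⟨⟨by push_cast [n]; linarith, by push_cast [n]; linarith⟩, rfl⟩

theorem Aset_mono (z : ℍ) : Monotone (Aset Γ hT z) :=
  fun _ _ hst _ ⟨δ, hδ, hdist⟩ => ⟨δ, hδ, hdist.trans hst⟩

theorem Aset_subset_horoDepth_le (z : ℍ) (t : ℝ) :
    Aset Γ hT z t ⊆ {q | horoDepth Γ hT z q ≤ t} := by
  rintro q ⟨δ, hδ, hdist⟩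
  have hmk : (Quotient.mk _ δ : Cosets Γ hT) = Quotient.mk _ (Quotient.out q) := by
    rw [hδ, Quotient.out_eq]
  show |log (((Quotient.out q : Γ) : SL(2, ℝ)) • z).im| ≤ t
  rw [im_smul_eq_of_mk_eq hmk z]
  exact (abs_log_im_le_dist_I _).trans hdist

theorem horoDepth_le_subset_Aset (z : ℍ) (t : ℝ) :
    {q | horoDepth Γ hT z q ≤ t} ⊆ Aset Γ hT z (t + 1) := by
  intro q hq
  obtain ⟨δ, hδ, hre, him⟩ := exists_mk_eq_abs_re_le z q
  refine ⟨δ, hδ, (dist_I_le_abs_re_add_abs_log_im _).trans ?_⟩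
  have hq' : |log (((Quotient.out q : Γ) : SL(2, ℝ)) • z).im| ≤ t := hq
  rw [him]
  linarith

theorem Eis_eq_tsum_exp_horoDepth {z : ℍ} (hzΓ : ∀ δ : Γ, ((δ : SL(2, ℝ)) • z).im ≤ 1)
    (s : ℝ) : Eis Γ hT z s = ∑' q, exp (-s * horoDepth Γ hT z q) := by
  refine tsum_congr fun q => ?_
  rw [eisTerm, horoDepth, abs_of_nonpos (log_nonpos (im_pos _).le (hzΓ _)),
    rpow_def_of_pos (im_pos _)]
  ring_nf

end Cosets

theorem eisenstein_integral_bounds (s : ℝ) (hs : 1 < s) (z : ℍ)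
    (hzΓ : ∀ δ : Γ, ((δ : SL(2, ℝ)) • z).im ≤ 1)
    (U : ℝ)
    (hPi : ∀ t : ℝ, 0 ≤ t →
      (Aset Γ hT z t).Finite ∧ ((Aset Γ hT z t).ncard : ℝ) ≤ U * Real.exp t) :
    s * ∫ t in Set.Ioi (0 : ℝ), Real.exp (-s * t) * ((Aset Γ hT z t).ncard : ℝ) ≤
        Eis Γ hT z s ∧
      Eis Γ hT z s ≤
        s * ∫ t in Set.Ioi (0 : ℝ), Real.exp (-s * t) * ((Aset Γ hT z (t + 1)).ncard : ℝ) := by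
  rw [Eis_eq_tsum_exp_horoDepth hzΓ]
  exact mul_integral_ncard_le_tsum_exp_le hs _ (fun _ => abs_nonneg _) _ (Aset_mono z)
    (Aset_subset_horoDepth_le z) (horoDepth_le_subset_Aset z) U hPi
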